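/- Let F₁, F₂ be the general real-coefficient cubic gauge-invariant nonlinearities. Suppose there exists a Hermitian matrix H = [[p, q₁+iq₂],[q₁-iq₂, r]] with p, q₁, q₂, r ∈ ℝ such that Im(conj(A₁)(pF₁ + (q₁+iq₂)F₂)(A₁,A₂) + conj(A₂)((q₁-iq₂)F₁ + rF₂)(A₁,A₂)) = 0 for all (A₁,A₂) ∈ ℂ². Then also Im(conj(A₁)(pF₁ + q₁F₂)(A₁,A₂) + conj(A₂)(q₁F₁ + rF₂)(A₁,A₂)) = 0 for all (A₁,A₂) ∈ ℂ². -/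
import Mathlib


/-- The general gauge-invariant cubic nonlinearity with six real coefficients. -/
noncomputable def Fcub (m₁ m₂ m₃ m₄ m₅ m₆ : ℝ) (u₁ u₂ : ℂ) : ℂ :=
  ((m₁ * Complex.normSq u₁ : ℝ) : ℂ) * u₁ + ((m₂ * Complex.normSq u₁ : ℝ) : ℂ) * u₂
    + (m₃ : ℂ) * u₁ ^ 2 * (starRingEnd ℂ) u₂ + ((m₄ * Complex.normSq u₂ : ℝ) : ℂ) * u₁
    + (m₅ : ℂ) * u₂ ^ 2 * (starRingEnd ℂ) u₁ + ((m₆ * Complex.normSq u₂ : ℝ) : ℂ) * u₂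

theorem stmt14 (l₁ l₂ l₃ l₄ l₅ l₆ l₇ l₈ l₉ l₁₀ l₁₁ l₁₂ : ℝ) (p q₁ q₂ r : ℝ)
    (hH0 : ∀ A₁ A₂ : ℂ,
      ((starRingEnd ℂ) A₁ * ((p : ℂ) * Fcub l₁ l₂ l₃ l₄ l₅ l₆ A₁ A₂
            + ((q₁ : ℂ) + (q₂ : ℂ) * Complex.I) * Fcub l₇ l₈ l₉ l₁₀ l₁₁ l₁₂ A₁ A₂)
        + (starRingEnd ℂ) A₂ * (((q₁ : ℂ) - (q₂ : ℂ) * Complex.I) * Fcub l₁ l₂ l₃ l₄ l₅ l₆ A₁ A₂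
            + (r : ℂ) * Fcub l₇ l₈ l₉ l₁₀ l₁₁ l₁₂ A₁ A₂)).im = 0) :
    ∀ A₁ A₂ : ℂ,
      ((starRingEnd ℂ) A₁ * ((p : ℂ) * Fcub l₁ l₂ l₃ l₄ l₅ l₆ A₁ A₂
            + (q₁ : ℂ) * Fcub l₇ l₈ l₉ l₁₀ l₁₁ l₁₂ A₁ A₂)
        + (starRingEnd ℂ) A₂ * ((q₁ : ℂ) * Fcub l₁ l₂ l₃ l₄ l₅ l₆ A₁ A₂
            + (r : ℂ) * Fcub l₇ l₈ l₉ l₁₀ l₁₁ l₁₂ A₁ A₂)).im = 0 := by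
  rintro ⟨a, b⟩ ⟨c, d⟩
  have h1 := hH0 ⟨a, b⟩ ⟨c, d⟩
  have h2 := hH0 ⟨a, -b⟩ ⟨c, -d⟩
  set_option maxRecDepth 8000 in
  set_option maxHeartbeats 2000000 in
  simp only [Fcub, Complex.normSq_mk, Complex.ext_iff, Complex.add_im, Complex.mul_im,
    Complex.mul_re, Complex.add_re, Complex.sub_re, Complex.sub_im, Complex.ofReal_re,
    Complex.ofReal_im, Complex.I_re, Complex.I_im, Complex.conj_re, Complex.conj_im,
    pow_two] at h1 h2 ⊢
  linear_combination (h1 - h2) / 2
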